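/- Let V satisfy Assumption (V) with exponent m > 0 and let (φ^t) be the Hamiltonian flow of p(x,ξ) = V(x) + |ξ|²/2, φ^t(ρ) = (x^t(ρ), ξ^t(ρ)). (i) If m < 1, then for every T ≥ 0 there exist C > 0 and E₀ > 0 such that for all E ≥ E₀, all r ≥ 0 and all ρ with p(ρ) = E: the Lebesgue measure of {t ∈ [0, T] : |x^t(ρ)| < r} is at most C·r/√E. (ii) If m ≥ 1, there exist C > 0 and E₀ > 0 such that for all E ≥ E₀, all T ≥ 0, all r ≥ 0 and all ρ with p(ρ) = E: the Lebesgue measure of {t ∈ [0, T] : |x^t(ρ)| < r} is at most C·r·(1 + T)/E^{1/(2m)}. -/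

import Mathlib

noncomputable section

open MeasureTheory

/-- The Japanese bracket `⟨x⟩ = (1 + |x|²)^{1/2}`. -/
def jap {E : Type*} [NormedAddCommGroup E] (x : E) : ℝ := Real.sqrt (1 + ‖x‖ ^ 2)

/-- `φ` is the (globally defined) Hamiltonian flow of `p(x,ξ) = V(x) + |ξ|²/2`. -/
def IsFlowV (d : ℕ) (V : EuclideanSpace ℝ (Fin d) → ℝ)
    (φ : ℝ → EuclideanSpace ℝ (Fin d) × EuclideanSpace ℝ (Fin d) →
      EuclideanSpace ℝ (Fin d) × EuclideanSpace ℝ (Fin d)) : Prop :=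
  (∀ ρ, φ 0 ρ = ρ) ∧ ∀ ρ t,
    HasDerivAt (fun s => (φ s ρ).1) ((φ t ρ).2) t ∧
    HasDerivAt (fun s => (φ s ρ).2) (-gradient V ((φ t ρ).1)) t

/-!
Along the flow, `u(t) = |x^t|²` satisfies `u'' = 2|ξ|² - 2⟨x, ∇V(x)⟩ = 4(E - V(x)) - 2⟨x, ∇V(x)⟩`.
On the ball `|x| ≤ R ~ E^{1/(2m)}` the symbol bounds make `V` and `⟨x, ∇V⟩` small compared with
`E`, so `u'' ≥ E` there: `u` is uniformly convex while the trajectory stays in that ball.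
By energy conservation the speed is at most `2√E`, so a time window of length `τ ~ R/√E` that
meets `{|x| < r}` (with `r ≤ R/2`) stays in the ball, and by convexity the times in such a window
with `|x| < r` form a set of diameter `≲ r/√E`. Covering `[0, T]` by `1 + T/τ` windows gives the
bound `r/√E + r T / E^{1/(2m)}`, which yields both regimes by comparing `√E` with `E^{1/(2m)}`.
-/

open Set InnerProductSpace
open scoped RealInnerProductSpace

section JapaneseBracket

variable {E : Type*} [NormedAddCommGroup E]

lemma one_le_jap (x : E) : 1 ≤ jap x :=
  Real.one_le_sqrt.2 (le_add_of_nonneg_right (by positivity))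

lemma jap_pos (x : E) : 0 < jap x :=
  one_pos.trans_le (one_le_jap x)

lemma norm_le_jap (x : E) : ‖x‖ ≤ jap x :=
  Real.le_sqrt_of_sq_le (by linarith)

lemma jap_rpow_le {x : E} {m R : ℝ} (hm : 0 ≤ m) (hR : 1 ≤ R) (hx : ‖x‖ ≤ R) :
    jap x ^ (2 * m) ≤ 2 ^ m * R ^ (2 * m) := by
  have hR₀ : 0 ≤ R := zero_le_one.trans hR
  have hsq : jap x ^ (2 : ℝ) ≤ 2 * R ^ (2 : ℝ) := by
    rw [jap, Real.rpow_two, Real.sq_sqrt (by positivity), Real.rpow_two]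
    nlinarith [norm_nonneg x]
  calc jap x ^ (2 * m) = (jap x ^ (2 : ℝ)) ^ m := Real.rpow_mul (jap_pos x).le _ _
    _ ≤ (2 * R ^ (2 : ℝ)) ^ m := Real.rpow_le_rpow (Real.rpow_nonneg (jap_pos x).le _) hsq hm
    _ = 2 ^ m * R ^ (2 * m) := by
      rw [Real.mul_rpow (by norm_num) (by positivity), ← Real.rpow_mul (by linarith)]

end JapaneseBracket

section Trajectory

variable {F : Type*} [NormedAddCommGroup F] [InnerProductSpace ℝ F] [CompleteSpace F]
  {V : F → ℝ} {x ξ : ℝ → F}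

theorem energy_eq_of_hamiltonian (hV : Differentiable ℝ V)
    (hx : ∀ t, HasDerivAt x (ξ t) t) (hξ : ∀ t, HasDerivAt ξ (-gradient V (x t)) t) (s t : ℝ) :
    V (x s) + ‖ξ s‖ ^ 2 / 2 = V (x t) + ‖ξ t‖ ^ 2 / 2 := by
  have hderiv : ∀ t, HasDerivAt (fun s => V (x s) + ‖ξ s‖ ^ 2 / 2) 0 t := fun t => by
    have h := ((hV (x t)).hasFDerivAt.comp_hasDerivAt t (hx t)).add ((hξ t).norm_sq.div_const 2)
    refine h.congr_deriv ?_
    rw [inner_neg_right, real_inner_comm, inner_gradient_left]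
    ring
  exact is_const_of_deriv_eq_zero (fun t => (hderiv t).differentiableAt)
    (fun t => (hderiv t).deriv) s t

theorem hasDerivAt_two_inner_of_hamiltonian (hx : ∀ t, HasDerivAt x (ξ t) t)
    (hξ : ∀ t, HasDerivAt ξ (-gradient V (x t)) t) (t : ℝ) :
    HasDerivAt (fun s => 2 * ⟪x s, ξ s⟫) (2 * ‖ξ t‖ ^ 2 - 2 * fderiv ℝ V (x t) (x t)) t := by
  refine (((hx t).inner ℝ (hξ t)).const_mul 2).congr_deriv ?_
  rw [inner_neg_right, real_inner_comm _ (x t), inner_gradient_left, real_inner_self_eq_norm_sq]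
  ring

end Trajectory

section RealLine

theorem mul_sq_sub_le_of_deriv2_ge {u u' u'' : ℝ → ℝ} {a b c s : ℝ} (hab : a ≤ b)
    (hu : ∀ t ∈ Icc a b, HasDerivAt u (u' t) t) (hu' : ∀ t ∈ Icc a b, HasDerivAt u' (u'' t) t)
    (hc : ∀ t ∈ Icc a b, c ≤ u'' t) (hnonneg : ∀ t ∈ Icc a b, 0 ≤ u t)
    (ha : u a ≤ s) (hb : u b ≤ s) : c * (b - a) ^ 2 ≤ 8 * s := by
  have hint : interior (Icc a b) ⊆ Icc a b := interior_subset
  -- `u - c t² / 2` is convex; compare its midpoint value with its values at `a` and `b`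
  have hconv : ConvexOn ℝ (Icc a b) (fun t => u t - c * t ^ 2 / 2) := by
    refine convexOn_of_hasDerivWithinAt2_nonneg (convex_Icc a b)
      (fun t ht => ((hu t ht).continuousAt.sub (by fun_prop)).continuousWithinAt)
      (f' := fun t => u' t - c * t) (f'' := fun t => u'' t - c) (fun t ht => ?_)
      (fun t ht => ((hu' t (hint ht)).sub ((hasDerivAt_id t).const_mul c
        |>.congr_deriv (mul_one c))).hasDerivWithinAt) (fun t ht => sub_nonneg.2 (hc t (hint ht)))
    exact ((hu t (hint ht)).sub (((hasDerivAt_pow 2 t).const_mul c).div_const 2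
      |>.congr_deriv (by ring))).hasDerivWithinAt
  have hmid := hconv.2 (left_mem_Icc.2 hab) (right_mem_Icc.2 hab)
    (by norm_num : (0:ℝ) ≤ 1 / 2) (by norm_num : (0:ℝ) ≤ 1 / 2) (by norm_num)
  have hmem : (1 / 2 : ℝ) • a + (1 / 2 : ℝ) • b ∈ Icc a b := by
    simp only [smul_eq_mul, mem_Icc]; constructor <;> linarith
  have h0 := hnonneg _ hmem
  simp only [smul_eq_mul] at hmid h0
  nlinarith

theorem volume_Icc_inter_setOf_lt_le {u u' u'' : ℝ → ℝ} {a b c r : ℝ} (hc₀ : 0 < c) (hr : 0 ≤ r)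
    (hu : ∀ t ∈ Icc a b, HasDerivAt u (u' t) t) (hu' : ∀ t ∈ Icc a b, HasDerivAt u' (u'' t) t)
    (hc : ∀ t ∈ Icc a b, c ≤ u'' t) (hnonneg : ∀ t ∈ Icc a b, 0 ≤ u t) :
    volume (Icc a b ∩ {t | u t < r ^ 2}) ≤ ENNReal.ofReal (3 * r / √c) := by
  have hsep : ∀ p ∈ Icc a b ∩ {t | u t < r ^ 2}, ∀ q ∈ Icc a b ∩ {t | u t < r ^ 2}, p ≤ q →
      c * (q - p) ^ 2 ≤ 8 * r ^ 2 := fun p hp q hq hpq => by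
    have hsub : Icc p q ⊆ Icc a b := Icc_subset_Icc hp.1.1 hq.1.2
    exact mul_sq_sub_le_of_deriv2_ge hpq (fun t ht => hu t (hsub ht)) (fun t ht => hu' t (hsub ht))
      (fun t ht => hc t (hsub ht)) (fun t ht => hnonneg t (hsub ht)) hp.2.le hq.2.le
  refine (Real.volume_le_diam _).trans (Metric.ediam_le fun p hp q hq => ?_)
  have hpq : c * (p - q) ^ 2 ≤ 8 * r ^ 2 := by
    rcases le_total p q with h | h
    · rw [← neg_sub, neg_sq]; exact hsep p hp q hq h
    · exact hsep q hq p hp h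
  have hsq : (p - q) ^ 2 ≤ (3 * r / √c) ^ 2 := by
    rw [div_pow, Real.sq_sqrt hc₀.le, le_div_iff₀ hc₀]
    nlinarith
  rw [edist_dist, Real.dist_eq]
  exact ENNReal.ofReal_le_ofReal (abs_le_of_sq_le_sq hsq (by positivity))

theorem volume_Icc_inter_le_of_windows {S : Set ℝ} {τ T : ℝ} {M : ENNReal} (hτ : 0 < τ)
    (hT : 0 ≤ T) (hM : ∀ k : ℕ, volume (Icc (k * τ) (k * τ + τ) ∩ S) ≤ M) :
    volume (Icc 0 T ∩ S) ≤ ENNReal.ofReal (T / τ + 1) * M := by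
  set N := ⌊T / τ⌋₊ + 1
  have hcover : Icc 0 T ∩ S ⊆ ⋃ k ∈ Finset.range N, Icc (k * τ) (k * τ + τ) ∩ S := by
    rintro t ⟨⟨ht₀, htT⟩, htS⟩
    have hk : ⌊t / τ⌋₊ ∈ Finset.range N := Finset.mem_range.2 <|
      Nat.lt_succ_of_le (Nat.floor_le_floor (div_le_div_of_nonneg_right htT hτ.le))
    refine mem_biUnion hk ⟨⟨?_, ?_⟩, htS⟩
    · exact (le_div_iff₀ hτ).1 (Nat.floor_le (div_nonneg ht₀ hτ.le))
    · have := (div_le_iff₀ hτ).1 (Nat.lt_floor_add_one (t / τ)).le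
      linarith
  have hN : (N : ENNReal) ≤ ENNReal.ofReal (T / τ + 1) := by
    rw [← ENNReal.ofReal_natCast]
    refine ENNReal.ofReal_le_ofReal ?_
    push_cast [N]
    linarith [Nat.floor_le (div_nonneg hT hτ.le)]
  calc volume (Icc 0 T ∩ S)
      ≤ ∑ k ∈ Finset.range N, volume (Icc (k * τ) (k * τ + τ) ∩ S) :=
        (measure_mono hcover).trans (measure_biUnion_finset_le _ _)
    _ ≤ N * M := by
        simpa using Finset.sum_le_sum fun k (_ : k ∈ Finset.range N) => hM k
    _ ≤ ENNReal.ofReal (T / τ + 1) * M := by gcongr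

end RealLine

section TimeNearOrigin

variable {F : Type*} [NormedAddCommGroup F] [InnerProductSpace ℝ F] {x ξ : ℝ → F} {w : ℝ → ℝ}

theorem volume_Icc_inter_setOf_norm_lt_le {a τ v c R r : ℝ} (hc₀ : 0 < c) (hr : 0 ≤ r)
    (hrR : r + v * τ ≤ R) (hx : ∀ t, HasDerivAt x (ξ t) t) (hξ : ∀ t, ‖ξ t‖ ≤ v)
    (hw : ∀ t, HasDerivAt (fun s => 2 * ⟪x s, ξ s⟫) (w t) t)
    (hc : ∀ t, ‖x t‖ ≤ R → c ≤ w t) :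
    volume (Icc a (a + τ) ∩ {t | ‖x t‖ < r}) ≤ ENNReal.ofReal (3 * r / √c) := by
  rcases (Icc a (a + τ) ∩ {t | ‖x t‖ < r}).eq_empty_or_nonempty with hempty | ⟨t₀, ht₀, hxt₀⟩
  · simp [hempty]
  have hball : ∀ t ∈ Icc a (a + τ), ‖x t‖ ≤ R := fun t ht => by
    have hlip := (convex_Icc a (a + τ)).norm_image_sub_le_of_norm_hasDerivWithin_le
      (fun s _ => (hx s).hasDerivWithinAt) (fun s _ => hξ s) ht₀ ht
    have hdt : ‖t - t₀‖ ≤ τ := by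
      rw [Real.norm_eq_abs, abs_le]; constructor <;> linarith [ht.1, ht.2, ht₀.1, ht₀.2]
    have hv : 0 ≤ v := (norm_nonneg _).trans (hξ t)
    have hxt₀' : ‖x t₀‖ < r := hxt₀
    linarith [norm_sub_norm_le (x t) (x t₀), mul_le_mul_of_nonneg_left hdt hv]
  have hset : {t | ‖x t‖ < r} = {t | ‖x t‖ ^ 2 < r ^ 2} := by
    ext t; exact (pow_lt_pow_iff_left₀ (norm_nonneg _) hr two_ne_zero).symm
  rw [hset]
  exact volume_Icc_inter_setOf_lt_le hc₀ hr (fun t _ => (hx t).norm_sq) (fun t _ => hw t)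
    (fun t ht => hc t (hball t ht)) (fun t _ => by positivity)

theorem volume_setOf_norm_lt_le {E R T r : ℝ} (hE : 0 < E) (hR : 0 < R) (hT : 0 ≤ T) (hr : 0 ≤ r)
    (hx : ∀ t, HasDerivAt x (ξ t) t) (hξ : ∀ t, ‖ξ t‖ ≤ 2 * √E)
    (hw : ∀ t, HasDerivAt (fun s => 2 * ⟪x s, ξ s⟫) (w t) t)
    (hc : ∀ t, ‖x t‖ ≤ R → E ≤ w t) :
    volume {t | t ∈ Icc 0 T ∧ ‖x t‖ < r} ≤ ENNReal.ofReal (3 * r / √E + 12 * r * T / R) := by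
  have hsqrt : 0 < √E := Real.sqrt_pos.2 hE
  rcases le_or_gt r (R / 2) with hrR | hRr
  · -- during a window of length `τ` the trajectory moves by at most `R / 2`
    set τ := R / (4 * √E) with hτ_def
    have hτ : 0 < τ := by positivity
    have hwin : r + 2 * √E * τ ≤ R := by
      have : 2 * √E * τ = R / 2 := by rw [hτ_def]; field_simp; ring
      linarith
    calc volume (Icc 0 T ∩ {t | ‖x t‖ < r})
        ≤ ENNReal.ofReal (T / τ + 1) * ENNReal.ofReal (3 * r / √E) :=
          volume_Icc_inter_le_of_windows hτ hT fun k =>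
            volume_Icc_inter_setOf_norm_lt_le hE hr hwin hx hξ hw hc
      _ = ENNReal.ofReal (3 * r / √E + 12 * r * T / R) := by
          rw [← ENNReal.ofReal_mul (by positivity)]
          congr 1
          rw [hτ_def]
          field_simp
          ring
  · calc volume {t | t ∈ Icc 0 T ∧ ‖x t‖ < r}
        ≤ volume (Icc 0 T) := measure_mono fun t ht => ht.1
      _ = ENNReal.ofReal T := by rw [Real.volume_Icc, sub_zero]
      _ ≤ ENNReal.ofReal (3 * r / √E + 12 * r * T / R) := by
          refine ENNReal.ofReal_le_ofReal ?_
          have : T ≤ 12 * r * T / R := by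
            rw [le_div_iff₀ hR]; nlinarith
          linarith [show 0 ≤ 3 * r / √E by positivity]

end TimeNearOrigin

section Potential

variable {F : Type*} [NormedAddCommGroup F]

theorem exists_bounds_of_nonneg_of_le_off_ball [ProperSpace F] {V g : F → ℝ} {r₀ : ℝ}
    (hV : Continuous V) (hg : ∀ x, 0 ≤ g x) (hout : ∀ x, r₀ ≤ ‖x‖ → 0 ≤ V x ∧ V x ≤ g x) :
    ∃ B, 0 ≤ B ∧ ∀ x, -B ≤ V x ∧ V x ≤ g x + B := by
  obtain ⟨B₀, hB₀⟩ := (isCompact_closedBall (0 : F) r₀).exists_bound_of_continuousOn hV.continuousOn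
  refine ⟨max B₀ 0, le_max_right _ _, fun x => ?_⟩
  rcases le_total ‖x‖ r₀ with hx | hx
  · have hVx := abs_le.1 ((Real.norm_eq_abs _).symm.trans_le (hB₀ x (mem_closedBall_zero_iff.2 hx)))
    constructor <;> linarith [le_max_left B₀ 0, hg x]
  · constructor <;> linarith [hout x hx, le_max_right B₀ 0]

theorem norm_le_two_mul_sqrt_of_energy {V : F → ℝ} {x ξ : F} {B E : ℝ} (hlow : -B ≤ V x)
    (hB : B ≤ E) (henergy : V x + ‖ξ‖ ^ 2 / 2 = E) : ‖ξ‖ ≤ 2 * √E := by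
  have hE : 0 ≤ E := by nlinarith [sq_nonneg ‖ξ‖]
  refine abs_le_of_sq_le_sq' ?_ (by positivity) |>.2
  rw [mul_pow, Real.sq_sqrt hE]
  linarith

variable [NormedSpace ℝ F]

theorem abs_fderiv_apply_self_le {V : F → ℝ} {x : F} {m C₁ : ℝ}
    (h : ‖fderiv ℝ V x‖ ≤ C₁ * jap x ^ (2 * m - 1)) :
    |fderiv ℝ V x x| ≤ C₁ * jap x ^ (2 * m) := by
  calc |fderiv ℝ V x x| ≤ ‖fderiv ℝ V x‖ * ‖x‖ := (fderiv ℝ V x).le_opNorm x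
    _ ≤ C₁ * jap x ^ (2 * m - 1) * jap x :=
        mul_le_mul h (norm_le_jap x) (norm_nonneg x) ((norm_nonneg _).trans h)
    _ = C₁ * jap x ^ (2 * m) := by
        rw [Real.rpow_sub_one (jap_pos x).ne', mul_assoc, div_mul_cancel₀ _ (jap_pos x).ne']

/-- Along the flow the right-hand side is `(‖x‖²)''`. -/
theorem le_two_mul_sq_sub_fderiv_apply_self {V : F → ℝ} {x ξ : F} {B C C₁ E m : ℝ}
    (hup : V x ≤ C * jap x ^ (2 * m) + B) (hder : |fderiv ℝ V x x| ≤ C₁ * jap x ^ (2 * m))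
    (henergy : V x + ‖ξ‖ ^ 2 / 2 = E)
    (hsmall : 4 * B + (4 * C + 2 * C₁) * jap x ^ (2 * m) ≤ 3 * E) :
    E ≤ 2 * ‖ξ‖ ^ 2 - 2 * fderiv ℝ V x x := by
  linarith [(abs_le.1 hder).2]

end Potential

section Flow

variable {F : Type*} [NormedAddCommGroup F] [InnerProductSpace ℝ F] [ProperSpace F]

theorem exists_volume_setOf_norm_lt_le {V : F → ℝ} {m C C₁ r₀ : ℝ} (hm : 0 < m)
    (hV : Differentiable ℝ V) (hC : 0 ≤ C) (hC₁ : 0 ≤ C₁)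
    (hout : ∀ x, r₀ ≤ ‖x‖ → 0 ≤ V x ∧ V x ≤ C * jap x ^ (2 * m))
    (hder : ∀ x, ‖fderiv ℝ V x‖ ≤ C₁ * jap x ^ (2 * m - 1)) :
    ∃ K > 0, ∃ E₀ ≥ 1, ∀ E ≥ E₀, ∀ T, 0 ≤ T → ∀ r, 0 ≤ r → ∀ x ξ : ℝ → F,
      (∀ t, HasDerivAt x (ξ t) t) → (∀ t, HasDerivAt ξ (-gradient V (x t)) t) →
      V (x 0) + ‖ξ 0‖ ^ 2 / 2 = E →
      volume {t | t ∈ Icc 0 T ∧ ‖x t‖ < r}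
        ≤ ENNReal.ofReal (3 * r / √E + K * r * T / E ^ (1 / (2 * m))) := by
  obtain ⟨B, hB, hVB⟩ := exists_bounds_of_nonneg_of_le_off_ball hV.continuous
    (fun x => mul_nonneg hC (Real.rpow_nonneg (jap_pos x).le _)) hout
  set A := 2 ^ m * (4 * C + 2 * C₁) + 1
  have hA : 1 ≤ A := le_add_of_nonneg_left (by positivity)
  refine ⟨12 * A ^ (1 / (2 * m)), by positivity, A + 4 * B, by linarith,
    fun E hE T hT r hr x ξ hx hξ hE₀ => ?_⟩
  have hEpos : 0 < E := by linarith
  have henergy : ∀ t, V (x t) + ‖ξ t‖ ^ 2 / 2 = E :=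
    fun t => (energy_eq_of_hamiltonian hV hx hξ t 0).trans hE₀
  -- `A` is chosen so that `(4C + 2C₁)⟨x⟩^{2m} ≤ (A - 1) / A * E` on the ball of radius `R`
  set R := (E / A) ^ (1 / (2 * m)) with hR_def
  have hR : R ^ (2 * m) = E / A := by
    rw [← Real.rpow_mul (by positivity), one_div_mul_cancel (by positivity), Real.rpow_one]
  have hR₁ : 1 ≤ R := Real.one_le_rpow ((one_le_div (by linarith)).2 (by linarith)) (by positivity)
  have hvirial : ∀ t, ‖x t‖ ≤ R → E ≤ 2 * ‖ξ t‖ ^ 2 - 2 * fderiv ℝ V (x t) (x t) := by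
    intro t ht
    refine le_two_mul_sq_sub_fderiv_apply_self (hVB (x t)).2 (abs_fderiv_apply_self_le (hder _))
      (henergy t) ?_
    have hfrac : (A - 1) * (E / A) ≤ E := by
      rw [mul_div_assoc', div_le_iff₀ (by linarith)]; nlinarith
    calc 4 * B + (4 * C + 2 * C₁) * jap (x t) ^ (2 * m)
        ≤ 4 * B + (4 * C + 2 * C₁) * (2 ^ m * R ^ (2 * m)) := by
          gcongr; exact jap_rpow_le hm.le hR₁ ht
      _ = 4 * B + (A - 1) * (E / A) := by rw [hR]; ring
      _ ≤ 3 * E := by linarith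
  have hspeed : ∀ t, ‖ξ t‖ ≤ 2 * √E :=
    fun t => norm_le_two_mul_sqrt_of_energy (hVB _).1 (by linarith) (henergy t)
  refine (volume_setOf_norm_lt_le hEpos (by positivity) hT hr hx hspeed
    (hasDerivAt_two_inner_of_hamiltonian hx hξ) hvirial).trans_eq ?_
  rw [hR_def, Real.div_rpow hEpos.le (by positivity)]
  field_simp

end Flow

theorem sqrt_le_rpow_one_div_two_mul {E m : ℝ} (hE : 1 ≤ E) (hm : 0 < m) (hm₁ : m ≤ 1) :
    √E ≤ E ^ (1 / (2 * m)) := by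
  rw [Real.sqrt_eq_rpow]
  exact Real.rpow_le_rpow_of_exponent_le hE (one_div_le_one_div_of_le (by positivity) (by linarith))

theorem rpow_one_div_two_mul_le_sqrt {E m : ℝ} (hE : 1 ≤ E) (hm₁ : 1 ≤ m) :
    E ^ (1 / (2 * m)) ≤ √E := by
  rw [Real.sqrt_eq_rpow]
  exact Real.rpow_le_rpow_of_exponent_le hE (one_div_le_one_div_of_le two_pos (by linarith))

/-- Classical non-observability of compact sets: time spent in a spatial ball during `[0,T]`
by high-energy Hamiltonian trajectories of `p = V(x) + |ξ|²/2`, `V` satisfying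
Assumption (V) with exponent `m > 0`. -/
theorem stmt_4 (d : ℕ) (m : ℝ) (hm : 0 < m)
    (V : EuclideanSpace ℝ (Fin d) → ℝ) (hVsmooth : ContDiff ℝ (⊤ : ℕ∞) V)
    (hVell : ∃ C : ℝ, 1 ≤ C ∧ ∃ r₀ > 0, ∀ x, r₀ ≤ ‖x‖ →
      C⁻¹ * jap x ^ (2 * m) ≤ V x ∧ V x ≤ C * jap x ^ (2 * m))
    (hVder : ∀ k : ℕ, ∃ Ck > 0, ∀ x,
      ‖iteratedFDeriv ℝ k V x‖ ≤ Ck * jap x ^ (2 * m - k))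
    (φ : ℝ → EuclideanSpace ℝ (Fin d) × EuclideanSpace ℝ (Fin d) →
      EuclideanSpace ℝ (Fin d) × EuclideanSpace ℝ (Fin d))
    (hφ : IsFlowV d V φ) :
    (m < 1 → ∀ T : ℝ, 0 ≤ T → ∃ C > 0, ∃ E₀ > 0, ∀ E : ℝ, E₀ ≤ E → ∀ r : ℝ, 0 ≤ r →
      ∀ ρ : EuclideanSpace ℝ (Fin d) × EuclideanSpace ℝ (Fin d),
        V ρ.1 + ‖ρ.2‖ ^ 2 / 2 = E →
        volume {t : ℝ | t ∈ Set.Icc 0 T ∧ ‖(φ t ρ).1‖ < r}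
          ≤ ENNReal.ofReal (C * r / Real.sqrt E)) ∧
    (1 ≤ m → ∃ C > 0, ∃ E₀ > 0, ∀ E : ℝ, E₀ ≤ E → ∀ T : ℝ, 0 ≤ T → ∀ r : ℝ, 0 ≤ r →
      ∀ ρ : EuclideanSpace ℝ (Fin d) × EuclideanSpace ℝ (Fin d),
        V ρ.1 + ‖ρ.2‖ ^ 2 / 2 = E →
        volume {t : ℝ | t ∈ Set.Icc 0 T ∧ ‖(φ t ρ).1‖ < r}
          ≤ ENNReal.ofReal (C * r * (1 + T) / E ^ (1 / (2 * m)))) := by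
  obtain ⟨C, hC, r₀, -, hell⟩ := hVell
  obtain ⟨C₁, hC₁, hder⟩ := hVder 1
  obtain ⟨K, hK, E₀, hE₀, hvol⟩ := exists_volume_setOf_norm_lt_le hm
    (hVsmooth.differentiable (by simp)) (zero_le_one.trans hC) hC₁.le
    (fun x hx => ⟨(mul_nonneg (by positivity) (Real.rpow_nonneg (jap_pos x).le _)).trans
      (hell x hx).1, (hell x hx).2⟩)
    (fun x => by simpa using hder x)
  have hflow : ∀ E ≥ E₀, ∀ T, 0 ≤ T → ∀ r, 0 ≤ r → ∀ ρ, V ρ.1 + ‖ρ.2‖ ^ 2 / 2 = E →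
      volume {t : ℝ | t ∈ Icc 0 T ∧ ‖(φ t ρ).1‖ < r}
        ≤ ENNReal.ofReal (3 * r / √E + K * r * T / E ^ (1 / (2 * m))) :=
    fun E hE T hT r hr ρ hρ => hvol E hE T hT r hr _ _ (fun t => (hφ.2 ρ t).1)
      (fun t => (hφ.2 ρ t).2) (by rwa [hφ.1 ρ])
  refine ⟨fun hm₁ T hT => ⟨3 + K * T, by positivity, E₀, by linarith,
    fun E hE r hr ρ hρ => (hflow E hE T hT r hr ρ hρ).trans (ENNReal.ofReal_le_ofReal ?_)⟩,
    fun hm₁ => ⟨3 + K, by positivity, E₀, by linarith,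
    fun E hE T hT r hr ρ hρ => (hflow E hE T hT r hr ρ hρ).trans (ENNReal.ofReal_le_ofReal ?_)⟩⟩
  · have hE₁ : 1 ≤ E := hE₀.trans hE
    have := div_le_div_of_nonneg_left (by positivity : 0 ≤ K * r * T) (by positivity)
      (sqrt_le_rpow_one_div_two_mul hE₁ hm hm₁.le)
    rw [show (3 + K * T) * r / √E = 3 * r / √E + K * r * T / √E by ring]
    linarith
  · have hE₁ : 1 ≤ E := hE₀.trans hE
    have := div_le_div_of_nonneg_left (by positivity : 0 ≤ 3 * r) (by positivity)
      (rpow_one_div_two_mul_le_sqrt hE₁ hm₁)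
    rw [show (3 + K) * r * (1 + T) / E ^ (1 / (2 * m)) = 3 * r / E ^ (1 / (2 * m))
      + (3 * r * T + K * r) / E ^ (1 / (2 * m)) + K * r * T / E ^ (1 / (2 * m)) by ring]
    linarith [show 0 ≤ (3 * r * T + K * r) / E ^ (1 / (2 * m)) by positivity]

end
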